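/- (Power-scaling Case III, equation (38)) If 0 < α < 1, ε = 1 and γ > 0, then lim_{M→∞} R̃_i(M) = λ·log₂(1 + E_r·ψ_{AR,i}²/S) + λ·log₂(1 + E_r·ψ_{BR,i}²/S); that is, the asymptotic spectral efficiency is determined by the downlink phase and is independent of E_u. -/

import Mathlib

open Real Filter Topology Finset

noncomputable section

/-- `η = τ·p_p·β/(1+τ·p_p·β)`. -/
def etaP (τ pp β : ℝ) : ℝ := τ * pp * β / (1 + τ * pp * β)

/-- `ω = β(K+η)/(K+1)`. -/
def omegaP (τ pp β K : ℝ) : ℝ := β * (K + etaP τ pp β) / (K + 1)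

/-- `σ² = β/((1+τ·p_p·β)(K+1))`. -/
def sigma2P (τ pp β K : ℝ) : ℝ := β / ((1 + τ * pp * β) * (K + 1))

/-- Generic interference coefficient: with `(b₁,k₁)` and `(b₂,k₂)` the two links involved,
`b₁·b₂/((k₁+1)(k₂+1))·[(k₁+η₁)/(1+τ·p_p·b₂) + k₂·η₁ + k₁·η₂ + η₁·η₂]`.
It specializes to `ξ_{XR,ij}`, `χ_{XR,ij}` and `ζ_{XR,ij}` of (25)–(27). -/
def xiP (τ pp b1 k1 b2 k2 : ℝ) : ℝ :=
  b1 * b2 / ((k1 + 1) * (k2 + 1)) *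
    ((k1 + etaP τ pp b1) / (1 + τ * pp * b2) + k2 * etaP τ pp b1
      + k1 * etaP τ pp b2 + etaP τ pp b1 * etaP τ pp b2)

variable {N : ℕ}

/-- `q_i = p_u σ²_{AR,i} + p_u σ²_{BR,i} + 1`. -/
def qP (τ pp pu : ℝ) (βA βB KA KB : Fin N → ℝ) (i : Fin N) : ℝ :=
  pu * sigma2P τ pp (βA i) (KA i) + pu * sigma2P τ pp (βB i) (KB i) + 1

/-- `Q_i = Σ_{j≠i} p_u·(ξ_{AR,ij}+ξ_{BR,ij}+χ_{AR,ij}+χ_{BR,ij})`. -/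
def QP (τ pp pu : ℝ) (βA βB KA KB : Fin N → ℝ) (i : Fin N) : ℝ :=
  ∑ j ∈ Finset.univ \ {i},
    pu * (xiP τ pp (βA i) (KA i) (βA j) (KA j) + xiP τ pp (βB i) (KB i) (βA j) (KA j)
      + xiP τ pp (βA i) (KA i) (βB j) (KB j) + xiP τ pp (βB i) (KB i) (βB j) (KB j))

/-- `Z_{ij} = p_r·(ζ_{AR,ij}+ζ_{BR,ij})`. -/
def ZP (τ pp pr : ℝ) (βA βB KA KB : Fin N → ℝ) (i j : Fin N) : ℝ :=
  pr * (xiP τ pp (βA j) (KA j) (βA i) (KA i) + xiP τ pp (βB j) (KB j) (βA i) (KA i))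

/-- `R̃_{1,i}(M)` of Theorem 1 (uplink phase). -/
def R1P (lam τ pp pu : ℝ) (βA βB KA KB : Fin N → ℝ) (i : Fin N) (M : ℝ) : ℝ :=
  lam * logb 2 (1 +
    (M * pu * (omegaP τ pp (βA i) (KA i)) ^ 2 + M * pu * (omegaP τ pp (βB i) (KB i)) ^ 2)
      / ((omegaP τ pp (βA i) (KA i) + omegaP τ pp (βB i) (KB i)) * qP τ pp pu βA βB KA KB i
          + QP τ pp pu βA βB KA KB i))

/-- `R̃_{AR,i}(M)` of Theorem 1. -/
def RARP (lam τ pp pu : ℝ) (βA βB KA KB : Fin N → ℝ) (i : Fin N) (M : ℝ) : ℝ :=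
  lam * logb 2 (1 + M * pu * (omegaP τ pp (βA i) (KA i)) ^ 2
      / ((omegaP τ pp (βA i) (KA i) + omegaP τ pp (βB i) (KB i)) * qP τ pp pu βA βB KA KB i
          + QP τ pp pu βA βB KA KB i))

/-- `R̃_{BR,i}(M)` of Theorem 1. -/
def RBRP (lam τ pp pu : ℝ) (βA βB KA KB : Fin N → ℝ) (i : Fin N) (M : ℝ) : ℝ :=
  lam * logb 2 (1 + M * pu * (omegaP τ pp (βB i) (KB i)) ^ 2
      / ((omegaP τ pp (βA i) (KA i) + omegaP τ pp (βB i) (KB i)) * qP τ pp pu βA βB KA KB i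
          + QP τ pp pu βA βB KA KB i))

/-- `R̃_{RA,i}(M)` of Theorem 1 (downlink to `U_{A,i}`). -/
def RRAP (lam τ pp pr : ℝ) (βA βB KA KB : Fin N → ℝ) (i : Fin N) (M : ℝ) : ℝ :=
  lam * logb 2 (1 + M * pr * (omegaP τ pp (βA i) (KA i)) ^ 2
      / (∑ j, (omegaP τ pp (βA j) (KA j) + omegaP τ pp (βB j) (KB j)
          + ZP τ pp pr βA βB KA KB i j)))

/-- `R̃_{RB,i}(M)` of Theorem 1 (downlink to `U_{B,i}`). -/
def RRBP (lam τ pp pr : ℝ) (βA βB KA KB : Fin N → ℝ) (i : Fin N) (M : ℝ) : ℝ :=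
  lam * logb 2 (1 + M * pr * (omegaP τ pp (βB i) (KB i)) ^ 2
      / (∑ j, (omegaP τ pp (βA j) (KA j) + omegaP τ pp (βB j) (KB j)
          + ZP τ pp pr βA βB KA KB i j)))

/-- `R̃_{2,i}(M) = min(R̃_{AR,i}, R̃_{RB,i}) + min(R̃_{BR,i}, R̃_{RA,i})`. -/
def R2P (lam τ pp pu pr : ℝ) (βA βB KA KB : Fin N → ℝ) (i : Fin N) (M : ℝ) : ℝ :=
  min (RARP lam τ pp pu βA βB KA KB i M) (RRBP lam τ pp pr βA βB KA KB i M)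
    + min (RBRP lam τ pp pu βA βB KA KB i M) (RRAP lam τ pp pr βA βB KA KB i M)

/-- `R̃_i(M) = min(R̃_{1,i}(M), R̃_{2,i}(M))`. -/
def RtotP (lam τ pp pu pr : ℝ) (βA βB KA KB : Fin N → ℝ) (i : Fin N) (M : ℝ) : ℝ :=
  min (R1P lam τ pp pu βA βB KA KB i M) (R2P lam τ pp pu pr βA βB KA KB i M)

end

/-!
As `M → ∞` the pilot power `p_p` vanishes, so `η → 0`, `ω → ψ`, `σ² → β/(K+1)` and every
interference coefficient stays bounded. Since `p_u → 0` while `M·p_u = E_u·M^(1-α) → ∞`, the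
uplink SINRs diverge, so each `min` in `R̃_i` is eventually attained by its downlink branch; there
`M·p_r = E_r` and `Z_{ij} → 0`, so the downlink SINRs converge to `E_r·ψ²/S`.
-/

noncomputable def psiP (β K : ℝ) : ℝ := β * K / (K + 1)

lemma psiP_pos {β K : ℝ} (hβ : 0 < β) (hK : 0 < K) : 0 < psiP β K :=
  div_pos (mul_pos hβ hK) (by linarith)

lemma tendsto_min_of_tendsto_atTop_left {ι α : Type*} [LinearOrder α] [TopologicalSpace α]
    [OrderTopology α] [NoMaxOrder α] {l : Filter ι} {f g : ι → α} {c : α}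
    (hf : Tendsto f l atTop) (hg : Tendsto g l (𝓝 c)) :
    Tendsto (fun x => min (f x) (g x)) l (𝓝 c) := by
  obtain ⟨b, hcb⟩ := exists_gt c
  refine hg.congr' ?_
  filter_upwards [hf.eventually_ge_atTop b, hg.eventually_lt_const hcb] with x hfx hgx
  exact (min_eq_right (hgx.le.trans hfx)).symm

section LogRate

variable {ι : Type*} {l : Filter ι} {a d : ι → ℝ} {b lam D : ℝ}

lemma tendsto_mul_logb_one_add_div_atTop (hb : 1 < b) (hlam : 0 < lam) (hD : 0 < D)
    (ha : Tendsto a l atTop) (hd : Tendsto d l (𝓝 D)) :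
    Tendsto (fun x => lam * logb b (1 + a x / d x)) l atTop := by
  have hratio : Tendsto (fun x => a x / d x) l atTop := by
    simpa only [div_eq_mul_inv] using ha.atTop_mul_pos (inv_pos.mpr hD) (hd.inv₀ hD.ne')
  exact ((tendsto_logb_atTop hb).comp
    (tendsto_atTop_add_const_left _ 1 hratio)).const_mul_atTop hlam

lemma tendsto_mul_logb_one_add_div {A : ℝ} (hA : 0 ≤ A) (hD : 0 < D)
    (ha : Tendsto a l (𝓝 A)) (hd : Tendsto d l (𝓝 D)) :
    Tendsto (fun x => lam * logb b (1 + a x / d x)) l (𝓝 (lam * logb b (1 + A / D))) := by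
  have hpos : 0 < 1 + A / D := by positivity
  exact (((ha.div hd hD.ne').const_add 1).logb hpos.ne').const_mul lam

end LogRate

section VanishingPilotPower

variable {ι : Type*} {l : Filter ι} {pp : ι → ℝ} (hpp : Tendsto pp l (𝓝 0)) (τ : ℝ)
include hpp

lemma tendsto_one_add_mul_pilot (β : ℝ) :
    Tendsto (fun x => 1 + τ * pp x * β) l (𝓝 1) := by
  simpa using ((hpp.const_mul τ).mul_const β).const_add 1

lemma tendsto_etaP (β : ℝ) : Tendsto (fun x => etaP τ (pp x) β) l (𝓝 0) := by
  simpa [etaP, Pi.div_def] using ((hpp.const_mul τ).mul_const β).div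
    (tendsto_one_add_mul_pilot hpp τ β) one_ne_zero

lemma tendsto_omegaP (β K : ℝ) :
    Tendsto (fun x => omegaP τ (pp x) β K) l (𝓝 (psiP β K)) := by
  simpa [omegaP, psiP] using
    (((tendsto_etaP hpp τ β).const_add K).const_mul β).div_const (K + 1)

lemma tendsto_sigma2P {β K : ℝ} (hK : K + 1 ≠ 0) :
    Tendsto (fun x => sigma2P τ (pp x) β K) l (𝓝 (β / (K + 1))) := by
  simpa [sigma2P, Pi.div_def] using tendsto_const_nhds.div
    ((tendsto_one_add_mul_pilot hpp τ β).mul_const (K + 1)) (by simpa using hK)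

lemma tendsto_xiP (b₁ k₁ b₂ k₂ : ℝ) :
    Tendsto (fun x => xiP τ (pp x) b₁ k₁ b₂ k₂) l
      (𝓝 (b₁ * b₂ / ((k₁ + 1) * (k₂ + 1)) * k₁)) := by
  have h₁ := tendsto_etaP hpp τ b₁
  have h₂ := tendsto_etaP hpp τ b₂
  have hfirst := (h₁.const_add k₁).div (tendsto_one_add_mul_pilot hpp τ b₂) one_ne_zero
  simpa [xiP, Pi.div_def] using ((((hfirst.add (h₁.const_mul k₂)).add (h₂.const_mul k₁)).add
    (h₁.mul h₂)).const_mul (b₁ * b₂ / ((k₁ + 1) * (k₂ + 1))))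

end VanishingPilotPower

section SINRDenominators

variable {ι : Type*} {l : Filter ι} {N : ℕ} {τ : ℝ} {βA βB KA KB : Fin N → ℝ}
  {pp pu pr : ι → ℝ} (hpp : Tendsto pp l (𝓝 0)) (i : Fin N)
include hpp

lemma tendsto_qP (hpu : Tendsto pu l (𝓝 0)) (hKA : KA i + 1 ≠ 0) (hKB : KB i + 1 ≠ 0) :
    Tendsto (fun x => qP τ (pp x) (pu x) βA βB KA KB i) l (𝓝 1) := by
  simpa [qP] using ((hpu.mul (tendsto_sigma2P hpp τ hKA)).add
    (hpu.mul (tendsto_sigma2P hpp τ hKB))).add_const 1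

lemma tendsto_QP (hpu : Tendsto pu l (𝓝 0)) :
    Tendsto (fun x => QP τ (pp x) (pu x) βA βB KA KB i) l (𝓝 0) := by
  have h := tendsto_finsetSum (univ \ {i}) fun j _ => hpu.mul
    ((((tendsto_xiP hpp τ (βA i) (KA i) (βA j) (KA j)).add
      (tendsto_xiP hpp τ (βB i) (KB i) (βA j) (KA j))).add
      (tendsto_xiP hpp τ (βA i) (KA i) (βB j) (KB j))).add
      (tendsto_xiP hpp τ (βB i) (KB i) (βB j) (KB j)))
  simpa [QP] using h

lemma tendsto_uplink_denominator (hpu : Tendsto pu l (𝓝 0))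
    (hKA : KA i + 1 ≠ 0) (hKB : KB i + 1 ≠ 0) :
    Tendsto (fun x => (omegaP τ (pp x) (βA i) (KA i) + omegaP τ (pp x) (βB i) (KB i))
        * qP τ (pp x) (pu x) βA βB KA KB i + QP τ (pp x) (pu x) βA βB KA KB i) l
      (𝓝 (psiP (βA i) (KA i) + psiP (βB i) (KB i))) := by
  simpa using (((tendsto_omegaP hpp τ _ _).add (tendsto_omegaP hpp τ _ _)).mul
    (tendsto_qP hpp i hpu hKA hKB)).add (tendsto_QP hpp i hpu)

lemma tendsto_downlink_denominator (hpr : Tendsto pr l (𝓝 0)) :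
    Tendsto (fun x => ∑ j, (omegaP τ (pp x) (βA j) (KA j) + omegaP τ (pp x) (βB j) (KB j)
        + ZP τ (pp x) (pr x) βA βB KA KB i j)) l
      (𝓝 (∑ j, (psiP (βA j) (KA j) + psiP (βB j) (KB j)))) := by
  have hZ (j : Fin N) : Tendsto (fun x => ZP τ (pp x) (pr x) βA βB KA KB i j) l (𝓝 0) := by
    simpa [ZP] using hpr.mul ((tendsto_xiP hpp τ (βA j) (KA j) (βA i) (KA i)).add
      (tendsto_xiP hpp τ (βB j) (KB j) (βA i) (KA i)))
  simpa using tendsto_finsetSum univ fun j _ =>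
    ((tendsto_omegaP hpp τ (βA j) (KA j)).add (tendsto_omegaP hpp τ (βB j) (KB j))).add (hZ j)

end SINRDenominators

section Rates

variable {ι : Type*} {l : Filter ι} {N : ℕ} {τ lam : ℝ} {βA βB KA KB : Fin N → ℝ}
  {pp pu pr M : ι → ℝ} {i : Fin N}
  (hlam : 0 < lam) (hβA : ∀ j, 0 < βA j) (hβB : ∀ j, 0 < βB j)
  (hKA : ∀ j, 0 < KA j) (hKB : ∀ j, 0 < KB j) (hpp : Tendsto pp l (𝓝 0))
  (hpu : Tendsto pu l (𝓝 0)) (hMpu : Tendsto (fun x => M x * pu x) l atTop)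
  {Er : ℝ} (hEr : 0 ≤ Er) (hpr : Tendsto pr l (𝓝 0))
  (hMpr : Tendsto (fun x => M x * pr x) l (𝓝 Er))

section Uplink

include hlam hβA hβB hKA hKB hpp hpu hMpu

lemma tendsto_R1P_atTop :
    Tendsto (fun x => R1P lam τ (pp x) (pu x) βA βB KA KB i (M x)) l atTop := by
  have hsnr : Tendsto (fun x => M x * pu x * omegaP τ (pp x) (βA i) (KA i) ^ 2
      + M x * pu x * omegaP τ (pp x) (βB i) (KB i) ^ 2) l atTop := by
    simpa only [mul_add] using hMpu.atTop_mul_pos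
      (by have := psiP_pos (hβA i) (hKA i); positivity)
      (((tendsto_omegaP hpp τ _ _).pow 2).add ((tendsto_omegaP hpp τ _ _).pow 2))
  exact tendsto_mul_logb_one_add_div_atTop one_lt_two hlam
    (add_pos (psiP_pos (hβA i) (hKA i)) (psiP_pos (hβB i) (hKB i))) hsnr
    (tendsto_uplink_denominator hpp i hpu (by linarith [hKA i]) (by linarith [hKB i]))

lemma tendsto_RARP_atTop :
    Tendsto (fun x => RARP lam τ (pp x) (pu x) βA βB KA KB i (M x)) l atTop :=
  tendsto_mul_logb_one_add_div_atTop one_lt_two hlam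
    (add_pos (psiP_pos (hβA i) (hKA i)) (psiP_pos (hβB i) (hKB i)))
    (hMpu.atTop_mul_pos (pow_pos (psiP_pos (hβA i) (hKA i)) 2)
      ((tendsto_omegaP hpp τ _ _).pow 2))
    (tendsto_uplink_denominator hpp i hpu (by linarith [hKA i]) (by linarith [hKB i]))

lemma tendsto_RBRP_atTop :
    Tendsto (fun x => RBRP lam τ (pp x) (pu x) βA βB KA KB i (M x)) l atTop :=
  tendsto_mul_logb_one_add_div_atTop one_lt_two hlam
    (add_pos (psiP_pos (hβA i) (hKA i)) (psiP_pos (hβB i) (hKB i)))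
    (hMpu.atTop_mul_pos (pow_pos (psiP_pos (hβB i) (hKB i)) 2)
      ((tendsto_omegaP hpp τ _ _).pow 2))
    (tendsto_uplink_denominator hpp i hpu (by linarith [hKA i]) (by linarith [hKB i]))

end Uplink

section Downlink

include hβA hβB hKA hKB hpp hEr hpr hMpr

lemma tendsto_RRAP :
    Tendsto (fun x => RRAP lam τ (pp x) (pr x) βA βB KA KB i (M x)) l
      (𝓝 (lam * logb 2 (1 + Er * psiP (βA i) (KA i) ^ 2
        / ∑ j, (psiP (βA j) (KA j) + psiP (βB j) (KB j))))) :=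
  tendsto_mul_logb_one_add_div (by positivity)
    (sum_pos (fun j _ => add_pos (psiP_pos (hβA j) (hKA j)) (psiP_pos (hβB j) (hKB j)))
      ⟨i, mem_univ i⟩)
    (hMpr.mul ((tendsto_omegaP hpp τ _ _).pow 2)) (tendsto_downlink_denominator hpp i hpr)

lemma tendsto_RRBP :
    Tendsto (fun x => RRBP lam τ (pp x) (pr x) βA βB KA KB i (M x)) l
      (𝓝 (lam * logb 2 (1 + Er * psiP (βB i) (KB i) ^ 2
        / ∑ j, (psiP (βA j) (KA j) + psiP (βB j) (KB j))))) :=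
  tendsto_mul_logb_one_add_div (by positivity)
    (sum_pos (fun j _ => add_pos (psiP_pos (hβA j) (hKA j)) (psiP_pos (hβB j) (hKB j)))
      ⟨i, mem_univ i⟩)
    (hMpr.mul ((tendsto_omegaP hpp τ _ _).pow 2)) (tendsto_downlink_denominator hpp i hpr)

end Downlink

include hlam hβA hβB hKA hKB hpp hpu hMpu hEr hpr hMpr

lemma tendsto_R2P :
    Tendsto (fun x => R2P lam τ (pp x) (pu x) (pr x) βA βB KA KB i (M x)) l
      (𝓝 (lam * logb 2 (1 + Er * psiP (βB i) (KB i) ^ 2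
          / ∑ j, (psiP (βA j) (KA j) + psiP (βB j) (KB j)))
        + lam * logb 2 (1 + Er * psiP (βA i) (KA i) ^ 2
          / ∑ j, (psiP (βA j) (KA j) + psiP (βB j) (KB j))))) :=
  (tendsto_min_of_tendsto_atTop_left (tendsto_RARP_atTop hlam hβA hβB hKA hKB hpp hpu hMpu)
      (tendsto_RRBP hβA hβB hKA hKB hpp hEr hpr hMpr)).add
    (tendsto_min_of_tendsto_atTop_left (tendsto_RBRP_atTop hlam hβA hβB hKA hKB hpp hpu hMpu)
      (tendsto_RRAP hβA hβB hKA hKB hpp hEr hpr hMpr))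

theorem tendsto_RtotP :
    Tendsto (fun x => RtotP lam τ (pp x) (pu x) (pr x) βA βB KA KB i (M x)) l
      (𝓝 (lam * logb 2 (1 + Er * psiP (βA i) (KA i) ^ 2
          / ∑ j, (psiP (βA j) (KA j) + psiP (βB j) (KB j)))
        + lam * logb 2 (1 + Er * psiP (βB i) (KB i) ^ 2
          / ∑ j, (psiP (βA j) (KA j) + psiP (βB j) (KB j))))) := by
  have hR2 := tendsto_R2P hlam hβA hβB hKA hKB hpp hpu hMpu hEr hpr hMpr (i := i) (τ := τ)
  rw [add_comm] at hR2
  exact tendsto_min_of_tendsto_atTop_left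
    (tendsto_R1P_atTop hlam hβA hβB hKA hKB hpp hpu hMpu) hR2

end Rates

lemma tendsto_div_natCast_rpow_atTop (E : ℝ) {a : ℝ} (ha : 0 < a) :
    Tendsto (fun M : ℕ => E / (M : ℝ) ^ a) atTop (𝓝 0) :=
  tendsto_const_nhds.div_atTop ((tendsto_rpow_atTop ha).comp tendsto_natCast_atTop_atTop)

lemma tendsto_natCast_mul_div_rpow_atTop {E a : ℝ} (hE : 0 < E) (ha : a < 1) :
    Tendsto (fun M : ℕ => (M : ℝ) * (E / (M : ℝ) ^ a)) atTop atTop := by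
  refine (((tendsto_rpow_atTop (sub_pos.mpr ha)).comp
    tendsto_natCast_atTop_atTop).const_mul_atTop hE).congr' ?_
  filter_upwards [eventually_gt_atTop 0] with M hM
  have hM : (0 : ℝ) < M := Nat.cast_pos.mpr hM
  simp only [Function.comp_apply, rpow_sub hM, rpow_one]
  field_simp

lemma tendsto_natCast_mul_div_rpow_one (E : ℝ) :
    Tendsto (fun M : ℕ => (M : ℝ) * (E / (M : ℝ) ^ (1 : ℝ))) atTop (𝓝 E) := by
  refine tendsto_const_nhds.congr' ?_
  filter_upwards [eventually_gt_atTop 0] with M hM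
  rw [rpow_one, mul_div_cancel₀ _ (Nat.cast_pos.mpr hM).ne']

theorem power_scaling_case_III_general
    (N : ℕ) (i : Fin N) (T τ : ℝ) (hτ : 0 < τ) (hT : τ < T)
    (lam : ℝ) (hlam : lam = (T - τ) / (2 * T))
    (Eu Er Ep : ℝ) (hEu : 0 < Eu) (hEr : 0 < Er)
    (βA βB KA KB : Fin N → ℝ)
    (hβA : ∀ j, 0 < βA j) (hβB : ∀ j, 0 < βB j)
    (hKA : ∀ j, 0 < KA j) (hKB : ∀ j, 0 < KB j)
    (α ε γ : ℝ) (hα0 : 0 < α) (hα1 : α < 1) (hε : ε = 1) (hγ : 0 < γ)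
    (psiA psiB : Fin N → ℝ)
    (hpsiA : ∀ j, psiA j = βA j * KA j / (KA j + 1))
    (hpsiB : ∀ j, psiB j = βB j * KB j / (KB j + 1))
    (S : ℝ) (hS : S = ∑ j, (psiA j + psiB j)) :
    Tendsto (fun M : ℕ =>
        RtotP lam τ (Ep / (M : ℝ) ^ γ) (Eu / (M : ℝ) ^ α) (Er / (M : ℝ) ^ ε)
          βA βB KA KB i (M : ℝ))
      atTop
      (𝓝 (lam * logb 2 (1 + Er * (psiA i) ^ 2 / S)
          + lam * logb 2 (1 + Er * (psiB i) ^ 2 / S))) := by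
  have hlam_pos : 0 < lam := hlam ▸ div_pos (by linarith) (by linarith)
  obtain rfl : psiA = fun j => psiP (βA j) (KA j) := funext hpsiA
  obtain rfl : psiB = fun j => psiP (βB j) (KB j) := funext hpsiB
  subst hS hε
  exact tendsto_RtotP hlam_pos hβA hβB hKA hKB (tendsto_div_natCast_rpow_atTop Ep hγ)
    (tendsto_div_natCast_rpow_atTop Eu hα0) (tendsto_natCast_mul_div_rpow_atTop hEu hα1) hEr.le
    (tendsto_div_natCast_rpow_atTop Er one_pos) (tendsto_natCast_mul_div_rpow_one Er)

/-- Power-scaling Case III, equation (38): if `0 < α < 1`, `ε = 1` and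
`γ > 0` then `R̃_i(M) → λ·log₂(1 + E_r·ψ_{AR,i}²/S) + λ·log₂(1 + E_r·ψ_{BR,i}²/S)`:
the asymptotic SE is determined by the downlink phase and is independent of `E_u`. -/
theorem power_scaling_case_III
    (N : ℕ) (hN : 1 ≤ N) (i : Fin N) (T τ : ℝ) (hτ : 0 < τ) (hT : τ < T)
    (lam : ℝ) (hlam : lam = (T - τ) / (2 * T))
    (Eu Er Ep : ℝ) (hEu : 0 < Eu) (hEr : 0 < Er) (hEp : 0 < Ep)
    (βA βB KA KB : Fin N → ℝ)
    (hβA : ∀ j, 0 < βA j) (hβB : ∀ j, 0 < βB j)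
    (hKA : ∀ j, 0 < KA j) (hKB : ∀ j, 0 < KB j)
    (α ε γ : ℝ) (hα0 : 0 < α) (hα1 : α < 1) (hε : ε = 1) (hγ : 0 < γ)
    (psiA psiB : Fin N → ℝ)
    (hpsiA : ∀ j, psiA j = βA j * KA j / (KA j + 1))
    (hpsiB : ∀ j, psiB j = βB j * KB j / (KB j + 1))
    (S : ℝ) (hS : S = ∑ j, (psiA j + psiB j)) :
    Tendsto (fun M : ℕ =>
        RtotP lam τ (Ep / (M : ℝ) ^ γ) (Eu / (M : ℝ) ^ α) (Er / (M : ℝ) ^ ε)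
          βA βB KA KB i (M : ℝ))
      atTop
      (𝓝 (lam * logb 2 (1 + Er * (psiA i) ^ 2 / S)
          + lam * logb 2 (1 + Er * (psiB i) ^ 2 / S))) :=
  power_scaling_case_III_general N i T τ hτ hT lam hlam Eu Er Ep hEu hEr βA βB KA KB hβA hβB hKA hKB
    α ε γ hα0 hα1 hε hγ psiA psiB hpsiA hpsiB S hS
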